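/- Let q be a prime power, 1 ≤ k < n, and let C be a systematic (n,k,q) code with associated functions f_1,...,f_{n-k}. With W_t and Δ_k as above, and A_i denoting the number of unordered pairs of distinct codewords at Hamming distance exactly i, we have for 1 ≤ t ≤ n: Σ_{i=1}^{t-1} A_i = (|W_t| - |Δ_k|)/2, and hence A_t = (|W_{t+1}| - |W_t|)/2 for 1 ≤ t ≤ n-1. -/

import Mathlib

def cw (F : Type) [Field F] (n k : ℕ) (f : Fin (n - k) → (Fin k → F) → F)
    (a : Fin k → F) : Fin n → F :=
  fun j => if h : (j : ℕ) < k then a ⟨j, h⟩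
    else f ⟨(j : ℕ) - k, by have := j.isLt; omega⟩ a

/-- `W t`: pairs of messages `(a, ã)` such that every squarefree monomial of degree `t`
in `n` variables vanishes at the difference vector of the corresponding codewords. -/
def W (F : Type) [Field F] (n k : ℕ) (f : Fin (n - k) → (Fin k → F) → F) (t : ℕ) :
    Set ((Fin k → F) × (Fin k → F)) :=
  {p | ∀ s : Finset (Fin n), s.card = t →
    ∏ j ∈ s, (cw F n k f p.1 j - cw F n k f p.2 j) = 0}

/-- The diagonal `Δ_k`. -/
def diag (F : Type) [Field F] (k : ℕ) : Set ((Fin k → F) × (Fin k → F)) :=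
  {p | p.1 = p.2}

/-- `A i`: the number of unordered pairs of distinct codewords at Hamming distance `i`. -/
noncomputable def A (F : Type) [Field F] [Fintype F] [DecidableEq F] (n k : ℕ)
    (f : Fin (n - k) → (Fin k → F) → F) (i : ℕ) : ℕ :=
  Nat.card {s : Sym2 (Fin n → F) //
    ∃ c₁ ∈ Set.range (cw F n k f), ∃ c₂ ∈ Set.range (cw F n k f),
      c₁ ≠ c₂ ∧ hammingDist c₁ c₂ = i ∧ s = s(c₁, c₂)}

/-!
A product of `t` coordinate differences vanishes for every `t`-subset of coordinates exactly when
fewer than `t` coordinates differ, so `W_t` is the set of ordered message pairs whose codewords are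
at Hamming distance `< t`. Since the encoding is injective, distance `0` gives the diagonal, and for
`i ≥ 1` the ordered pairs at distance `i` are the darts of the graph joining codewords at distance
`i`, which number twice its edges, i.e. `2 A_i`.
-/

open Finset Function

theorem forall_prod_sub_eq_zero_iff_hammingDist_lt {ι R : Type*} [Fintype ι] [CommRing R]
    [NoZeroDivisors R] [Nontrivial R] [DecidableEq R] (x y : ι → R) (t : ℕ) :
    (∀ s : Finset ι, #s = t → ∏ j ∈ s, (x j - y j) = 0) ↔ hammingDist x y < t := by
  constructor
  · intro h
    by_contra! hle
    obtain ⟨s, hs, rfl⟩ := exists_subset_card_eq hle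
    refine prod_ne_zero_iff.mpr (fun j hj => sub_ne_zero.mpr ?_) (h s rfl)
    simpa using hs hj
  · rintro hlt s rfl
    obtain ⟨j, hjs, hj⟩ := exists_mem_notMem_of_card_lt_card hlt
    exact prod_eq_zero hjs (sub_eq_zero.mpr (by simpa using hj))

theorem SimpleGraph.natCard_dart_eq_two_mul_natCard_edgeSet {V : Type*} [Finite V]
    (G : SimpleGraph V) : Nat.card G.Dart = 2 * Nat.card G.edgeSet := by
  classical
  have := Fintype.ofFinite V
  rw [Nat.card_eq_fintype_card, dart_card_eq_twice_card_edges, edgeFinset_card,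
    Nat.card_eq_fintype_card]

section HammingDistGraph

variable {ι α : Type*} {β : ι → Type*} [Fintype ι] [∀ i, DecidableEq (β i)]

def hammingDistGraph (S : Set (∀ i, β i)) (r : ℕ) : SimpleGraph (∀ i, β i) where
  Adj x y := x ∈ S ∧ y ∈ S ∧ x ≠ y ∧ hammingDist x y = r
  symm := ⟨fun x y ⟨hx, hy, hne, hd⟩ => ⟨hy, hx, hne.symm, hammingDist_comm y x ▸ hd⟩⟩
  loopless := ⟨fun _ h => h.2.2.1 rfl⟩

theorem edgeSet_hammingDistGraph (S : Set (∀ i, β i)) (r : ℕ) :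
    (hammingDistGraph S r).edgeSet = {s | ∃ c₁ ∈ S, ∃ c₂ ∈ S,
      c₁ ≠ c₂ ∧ hammingDist c₁ c₂ = r ∧ s = s(c₁, c₂)} := by
  ext s
  induction s using Sym2.ind with
  | h x y =>
    simp only [SimpleGraph.mem_edgeSet, Set.mem_ofPred_eq, Sym2.eq_iff]
    constructor
    · rintro ⟨hx, hy, hne, hd⟩
      exact ⟨x, hx, y, hy, hne, hd, .inl ⟨rfl, rfl⟩⟩
    · rintro ⟨c₁, hc₁, c₂, hc₂, hne, hd, ⟨rfl, rfl⟩ | ⟨rfl, rfl⟩⟩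
      · exact ⟨hc₁, hc₂, hne, hd⟩
      · exact (hammingDistGraph S r).symm.symm _ _ ⟨hc₁, hc₂, hne, hd⟩

theorem natCard_dart_hammingDistGraph_range {c : α → ∀ i, β i} (hc : Injective c) {r : ℕ}
    (hr : r ≠ 0) :
    Nat.card (hammingDistGraph (Set.range c) r).Dart =
      Nat.card {p : α × α | hammingDist (c p.1) (c p.2) = r} := by
  let G := hammingDistGraph (Set.range c) r
  have hdart : G.Dart ≃ {q : (∀ i, β i) × (∀ i, β i) | G.Adj q.1 q.2} :=
    { toFun := fun d => ⟨d.toProd, d.adj⟩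
      invFun := fun q => ⟨q.1, q.2⟩
      left_inv := fun _ => rfl
      right_inv := fun _ => rfl }
  have himage : {q : (∀ i, β i) × (∀ i, β i) | G.Adj q.1 q.2} =
      Prod.map c c '' {p : α × α | hammingDist (c p.1) (c p.2) = r} := by
    ext ⟨x, y⟩
    simp only [Set.mem_ofPred_eq, Set.mem_image, Prod.exists, Prod.map, Prod.mk.injEq]
    constructor
    · rintro ⟨⟨a, rfl⟩, ⟨b, rfl⟩, -, hd⟩
      exact ⟨a, b, hd, rfl, rfl⟩
    · rintro ⟨a, b, hd, rfl, rfl⟩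
      refine ⟨⟨a, rfl⟩, ⟨b, rfl⟩, fun he => hr ?_, hd⟩
      rwa [he, hammingDist_self, eq_comm] at hd
  rw [Nat.card_congr hdart, himage, Nat.card_image_of_injective (hc.prodMap hc)]

theorem setOf_hammingDist_eq_zero {c : α → ∀ i, β i} (hc : Injective c) :
    {p : α × α | hammingDist (c p.1) (c p.2) = 0} = Set.diagonal α := by
  ext p
  simp [hc.eq_iff]

theorem natCard_hammingDist_lt_eq_sum [Fintype α] (c : α → ∀ i, β i) (t : ℕ) :
    Nat.card {p : α × α | hammingDist (c p.1) (c p.2) < t} =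
      ∑ r ∈ range t, Nat.card {p : α × α | hammingDist (c p.1) (c p.2) = r} := by
  classical
  simp only [Nat.card_eq_card_toFinset, Set.toFinset_ofPred]
  rw [sum_card_fiberwise_eq_card_filter]
  simp only [mem_range]

theorem natCard_hammingDist_eq_two_mul [∀ i, Finite (β i)] {c : α → ∀ i, β i}
    (hc : Injective c) {r : ℕ} (hr : r ≠ 0) :
    Nat.card {p : α × α | hammingDist (c p.1) (c p.2) = r} =
      2 * Nat.card (hammingDistGraph (Set.range c) r).edgeSet := by
  rw [← natCard_dart_hammingDistGraph_range hc hr,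
    SimpleGraph.natCard_dart_eq_two_mul_natCard_edgeSet]

theorem natCard_hammingDist_lt_succ [Fintype α] [∀ i, Finite (β i)] {c : α → ∀ i, β i}
    (hc : Injective c) (t : ℕ) :
    Nat.card {p : α × α | hammingDist (c p.1) (c p.2) < t + 1} =
      Nat.card (Set.diagonal α) +
        2 * ∑ r ∈ Icc 1 t, Nat.card (hammingDistGraph (Set.range c) r).edgeSet := by
  rw [natCard_hammingDist_lt_eq_sum, range_eq_Ico, sum_eq_sum_Ico_succ_bot t.add_one_pos,
    zero_add, Ico_add_one_right_eq_Icc, setOf_hammingDist_eq_zero hc, mul_sum]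
  congr 1
  exact sum_congr rfl fun r hr =>
    natCard_hammingDist_eq_two_mul hc (Nat.one_le_iff_ne_zero.mp (mem_Icc.mp hr).1)

end HammingDistGraph

section SystematicCode

variable (F : Type) [Field F] (n k : ℕ) (f : Fin (n - k) → (Fin k → F) → F)

theorem cw_injective (hkn : k ≤ n) : Injective (cw F n k f) := fun a b h =>
  funext fun i => by simpa [cw] using congrFun h (i.castLE hkn)

theorem W_eq_setOf_hammingDist_lt [DecidableEq F] (t : ℕ) :
    W F n k f t = {p | hammingDist (cw F n k f p.1) (cw F n k f p.2) < t} := by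
  ext p
  exact forall_prod_sub_eq_zero_iff_hammingDist_lt (cw F n k f p.1) (cw F n k f p.2) t

theorem A_eq_natCard_edgeSet [Fintype F] [DecidableEq F] (r : ℕ) :
    A F n k f r = Nat.card (hammingDistGraph (Set.range (cw F n k f)) r).edgeSet := by
  rw [edgeSet_hammingDistGraph]
  rfl

end SystematicCode

theorem stmt12_general (F : Type) [Field F] [Fintype F] [DecidableEq F] (n k : ℕ)
    (hkn : k < n) (f : Fin (n - k) → (Fin k → F) → F) :
    (∀ t : ℕ, 1 ≤ t → t ≤ n →
      ∑ i ∈ Finset.Icc 1 (t - 1), A F n k f i =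
        (Nat.card (W F n k f t) - Nat.card (diag F k)) / 2) ∧
    (∀ t : ℕ, 1 ≤ t → t ≤ n - 1 →
      A F n k f t =
        (Nat.card (W F n k f (t + 1)) - Nat.card (W F n k f t)) / 2) := by
  have hW (t : ℕ) : Nat.card (W F n k f (t + 1)) =
      Nat.card (diag F k) + 2 * ∑ r ∈ Icc 1 t, A F n k f r := by
    simp only [W_eq_setOf_hammingDist_lt, A_eq_natCard_edgeSet]
    exact natCard_hammingDist_lt_succ (cw_injective F n k f hkn.le) t
  refine ⟨fun t ht _ => ?_, fun t ht _ => ?_⟩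
  · obtain ⟨t, rfl⟩ := Nat.exists_eq_add_of_le' ht
    rw [hW, Nat.add_sub_cancel]
    omega
  · obtain ⟨t, rfl⟩ := Nat.exists_eq_add_of_le' ht
    rw [hW, hW, sum_Icc_succ_top (by omega)]
    omega

theorem stmt12 (F : Type) [Field F] [Fintype F] [DecidableEq F] (n k : ℕ)
    (hk : 1 ≤ k) (hkn : k < n) (f : Fin (n - k) → (Fin k → F) → F) :
    (∀ t : ℕ, 1 ≤ t → t ≤ n →
      ∑ i ∈ Finset.Icc 1 (t - 1), A F n k f i =
        (Nat.card (W F n k f t) - Nat.card (diag F k)) / 2) ∧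
    (∀ t : ℕ, 1 ≤ t → t ≤ n - 1 →
      A F n k f t =
        (Nat.card (W F n k f (t + 1)) - Nat.card (W F n k f t)) / 2) :=
  stmt12_general F n k hkn f
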